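/- arXiv:1409.6463 — 3 statements merged into one kernel-verified Lean document; each statement's English description precedes it below -/
import Mathlib

section
/- Let (E,d) be a uniform SR (Staples rotund) metric space, let (x_n) be a bounded sequence in E, and let I(y) = limsup_n d(x_n,y) for y ∈ E. Then every minimizing sequence of the functional I (i.e. every sequence (y_k) in E with I(y_k) → inf_{z∈E} I(z)) is a Cauchy sequence. -/
open Filter Metric ENNReal MeasureTheory

noncomputable section

variable {E : Type*} [MetricSpace E]

/-- A sequence `x` Δ-converges to `p`: for every subsequence and every `y`,
`limsup d(x_{k_n}, p) ≤ limsup d(x_{k_n}, y)`. -/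
def DeltaConv (x : ℕ → E) (p : E) : Prop :=
  ∀ k : ℕ → ℕ, StrictMono k → ∀ y : E,
    Filter.limsup (fun n => edist (x (k n)) p) Filter.atTop ≤
      Filter.limsup (fun n => edist (x (k n)) y) Filter.atTop

/-- A sequence `x` strong-Δ converges to `p`: `lim d(x_n,p)` exists and for every `y`,
`lim d(x_n,p) ≤ liminf d(x_n,y)`. -/
def StrongDeltaConv (x : ℕ → E) (p : E) : Prop :=
  ∃ r : ℝ, Filter.Tendsto (fun n => dist (x n) p) Filter.atTop (nhds r) ∧
    ∀ y : E, r ≤ Filter.liminf (fun n => dist (x n) y) Filter.atTop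

/-- `p` is a polar limit of the sequence `x`: for every `y ≠ p`, eventually
`d(x_n,p) < d(x_n,y)`. -/
def PolarLim (x : ℕ → E) (p : E) : Prop :=
  ∀ y : E, y ≠ p → ∃ M : ℕ, ∀ n ≥ M, dist (x n) p < dist (x n) y

/-- `c` is an asymptotic center of the sequence `x`: it minimizes
`I(y) = limsup d(x_n, y)`. -/
def AsympCenter (x : ℕ → E) (c : E) : Prop :=
  ∀ y : E, Filter.limsup (fun n => dist (x n) c) Filter.atTop ≤
    Filter.limsup (fun n => dist (x n) y) Filter.atTop

/-- A metric space is Δ-complete if every bounded sequence admits an asymptotic center. -/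
def DeltaComplete (E : Type*) [MetricSpace E] : Prop :=
  ∀ x : ℕ → E, Bornology.IsBounded (Set.range x) → ∃ c : E, AsympCenter x c

/-- The Chebyshev radius of a set `X`: `inf_z sup_{w ∈ X} d(z,w)`. -/
def chebyshevRadius (X : Set E) : ℝ≥0∞ :=
  ⨅ z : E, ⨆ w ∈ X, edist z w

/-- A metric space is a uniform SR (Staples rotund) space if there is
`δ : (0,∞)² → (0,∞)` such that for all `r, d̄ > 0` and all `x, y` with `d(x,y) ≥ d̄`,
the Chebyshev radius of `B_{r+δ}(x) ∩ B_{r+δ}(y)` is at most `r − δ`. -/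
def IsUniformSR (E : Type*) [MetricSpace E] : Prop :=
  ∃ δ : ℝ → ℝ → ℝ,
    (∀ r dbar : ℝ, 0 < r → 0 < dbar → 0 < δ r dbar) ∧
    ∀ r dbar : ℝ, 0 < r → 0 < dbar → ∀ x y : E, dbar ≤ dist x y →
      chebyshevRadius
          (Metric.closedBall x (r + δ r dbar) ∩ Metric.closedBall y (r + δ r dbar)) ≤
        ENNReal.ofReal (r - δ r dbar)

/-! Let `ρ` be the infimum of `I(z) = limsup d(xₙ, z)`. If `ρ = 0`, two points with small `I`
are close by the triangle inequality through a common `xₙ`. If `ρ > 0` and `a, b` are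
`ε`-apart with `I(a), I(b) < ρ + δ(ρ, ε)`, then eventually every `xₙ` lies in
`B_{ρ+δ}(a) ∩ B_{ρ+δ}(b)`, whose Chebyshev radius is at most `ρ - δ`; a near-Chebyshev center
`z` of this intersection then has `I(z) < ρ`, which is impossible. Hence points of a minimizing
sequence are eventually uniformly close. -/

section LimsupDist

variable {ι : Type*} {l : Filter ι} {x : ι → E}

def limsupDist (l : Filter ι) (x : ι → E) (z : E) : ℝ :=
  limsup (fun n => dist (x n) z) l

lemma isBoundedUnder_le_dist (hx : Bornology.IsBounded (Set.range x)) (z : E) :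
    IsBoundedUnder (· ≤ ·) l (fun n => dist (x n) z) := by
  obtain ⟨r, hr⟩ := (isBounded_iff_subset_closedBall z).1 hx
  exact isBoundedUnder_of ⟨r, fun n => mem_closedBall.1 (hr (Set.mem_range_self n))⟩

lemma eventually_dist_lt_of_limsupDist_lt (hx : Bornology.IsBounded (Set.range x)) {z : E}
    {r : ℝ} (h : limsupDist l x z < r) : ∀ᶠ n in l, dist (x n) z < r :=
  eventually_lt_of_limsup_lt h (isBoundedUnder_le_dist hx z)

lemma limsupDist_le_of_eventually_dist_le [l.NeBot] {z : E} {r : ℝ}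
    (h : ∀ᶠ n in l, dist (x n) z ≤ r) : limsupDist l x z ≤ r :=
  limsup_le_of_le (isBoundedUnder_of ⟨0, fun _ => dist_nonneg⟩).isCoboundedUnder_le h

lemma limsupDist_nonneg [l.NeBot] (hx : Bornology.IsBounded (Set.range x)) (z : E) :
    0 ≤ limsupDist l x z :=
  le_limsup_of_frequently_le (Frequently.of_forall fun _ => dist_nonneg)
    (isBoundedUnder_le_dist hx z)

lemma dist_lt_add_of_limsupDist_lt [l.NeBot] (hx : Bornology.IsBounded (Set.range x))
    {a b : E} {s t : ℝ} (ha : limsupDist l x a < s) (hb : limsupDist l x b < t) :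
    dist a b < s + t := by
  obtain ⟨n, hna, hnb⟩ := ((eventually_dist_lt_of_limsupDist_lt hx ha).and
    (eventually_dist_lt_of_limsupDist_lt hx hb)).exists
  calc dist a b ≤ dist (x n) a + dist (x n) b := dist_triangle_left a b (x n)
    _ < s + t := add_lt_add hna hnb

lemma exists_eventually_dist_lt_of_chebyshevRadius_lt {X : Set E} {r : ℝ}
    (hX : ∀ᶠ n in l, x n ∈ X) (h : chebyshevRadius X < ENNReal.ofReal r) :
    ∃ z, ∀ᶠ n in l, dist (x n) z < r := by
  obtain ⟨z, hz⟩ := iInf_lt_iff.1 h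
  refine ⟨z, hX.mono fun n hn => ?_⟩
  rw [dist_comm, ← edist_lt_ofReal]
  exact (le_iSup₂ (f := fun w _ => edist z w) (x n) hn).trans_lt hz

lemma IsUniformSR.exists_limsupDist_lt (hSR : IsUniformSR E) [l.NeBot]
    (hx : Bornology.IsBounded (Set.range x)) {ρ ε : ℝ} (hρ : 0 < ρ) (hε : 0 < ε) :
    ∃ η > 0, ∀ a b, ε ≤ dist a b → limsupDist l x a < ρ + η → limsupDist l x b < ρ + η →
      ∃ z, limsupDist l x z < ρ := by
  obtain ⟨δ, hδpos, hδ⟩ := hSR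
  have hδ0 : 0 < δ ρ ε := hδpos ρ ε hρ hε
  refine ⟨δ ρ ε, hδ0, fun a b hab ha hb => ?_⟩
  have hmem : ∀ᶠ n in l,
      x n ∈ closedBall a (ρ + δ ρ ε) ∩ closedBall b (ρ + δ ρ ε) := by
    filter_upwards [eventually_dist_lt_of_limsupDist_lt hx ha,
      eventually_dist_lt_of_limsupDist_lt hx hb] with n hna hnb
    exact ⟨mem_closedBall.2 hna.le, mem_closedBall.2 hnb.le⟩
  have hcheb : chebyshevRadius (closedBall a (ρ + δ ρ ε) ∩ closedBall b (ρ + δ ρ ε)) <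
      ENNReal.ofReal ρ :=
    (hδ ρ ε hρ hε a b hab).trans_lt ((ENNReal.ofReal_lt_ofReal_iff hρ).2 (by linarith))
  obtain ⟨r, hr0, hcheb_r, hrρ⟩ := ENNReal.lt_iff_exists_real_btwn.1 hcheb
  obtain ⟨z, hz⟩ := exists_eventually_dist_lt_of_chebyshevRadius_lt hmem hcheb_r
  exact ⟨z, (limsupDist_le_of_eventually_dist_le (hz.mono fun _ => le_of_lt)).trans_lt
    ((ENNReal.ofReal_lt_ofReal_iff_of_nonneg hr0).1 hrρ)⟩

lemma IsUniformSR.exists_dist_lt_of_limsupDist_lt (hSR : IsUniformSR E) [l.NeBot]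
    (hx : Bornology.IsBounded (Set.range x)) {ε : ℝ} (hε : 0 < ε) :
    ∃ η > 0, ∀ a b, limsupDist l x a < (⨅ z, limsupDist l x z) + η →
      limsupDist l x b < (⨅ z, limsupDist l x z) + η → dist a b < ε := by
  set ρ := ⨅ z, limsupDist l x z
  have hρle : ∀ z, ρ ≤ limsupDist l x z :=
    ciInf_le ⟨0, Set.forall_mem_range.2 (limsupDist_nonneg hx)⟩
  have hρ0 : 0 ≤ ρ := Real.iInf_nonneg (limsupDist_nonneg hx)
  rcases hρ0.eq_or_lt with hρ | hρ
  · refine ⟨ε / 2, half_pos hε, fun a b ha hb => ?_⟩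
    rw [← hρ, zero_add] at ha hb
    simpa only [add_halves] using dist_lt_add_of_limsupDist_lt hx ha hb
  · obtain ⟨η, hη, hdrop⟩ := hSR.exists_limsupDist_lt (l := l) hx hρ hε
    refine ⟨η, hη, fun a b ha hb => not_le.1 fun hab => ?_⟩
    obtain ⟨z, hz⟩ := hdrop a b hab ha hb
    exact (hρle z).not_gt hz

end LimsupDist

/-- in a uniform SR space, every minimizing sequence of
`I(y) = limsup d(x_n,y)` is a Cauchy sequence. -/
theorem stmt_13 (hSR : IsUniformSR E) (x : ℕ → E)
    (hb : Bornology.IsBounded (Set.range x)) (y : ℕ → E)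
    (hy : Filter.Tendsto (fun k => Filter.limsup (fun n => dist (x n) (y k)) Filter.atTop)
      Filter.atTop
      (nhds (⨅ z : E, Filter.limsup (fun n => dist (x n) z) Filter.atTop))) :
    CauchySeq y := by
  have hmin : Tendsto (fun k => limsupDist atTop x (y k)) atTop
      (nhds (⨅ z, limsupDist atTop x z)) := hy
  refine Metric.cauchySeq_iff'.2 fun ε hε => ?_
  obtain ⟨η, hη, hclose⟩ := hSR.exists_dist_lt_of_limsupDist_lt (l := atTop) hb hε
  obtain ⟨N, hN⟩ := eventually_atTop.1 (hmin.eventually_lt_const (lt_add_of_pos_right _ hη))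
  exact ⟨N, fun n hn => hclose _ _ (hN n hn) (hN N le_rfl)⟩
end
end

section
/- Let (E,d) be a bounded complete uniform SR (Staples rotund) metric space, let x ∈ E, and let T : E → E be a nonexpansive map satisfying the PAR-condition at x. Then the iterations sequence (Tⁿ(x))_{n∈ℕ} has a polar limit which is a fixed point of T. -/
/-
Write `uₙ = Tⁿ x`. By completeness and rotundity the orbit has a unique asymptotic center `p`,
and nonexpansiveness makes `T p` another one, so `T p = p` and `d(uₙ, p)` decreases to the
asymptotic radius `r = inf_y limsup d(uₙ, y)`. In a uniform SR space, a point `q` with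
`limsup d(vₙ, q) ≤ inf_y liminf d(vₙ, y)` is a polar limit of `(vₙ)`: if `d(vₙ, y) ≤ d(vₙ, q)`
infinitely often, an approximate Chebyshev center of two balls around `q` and `y` has smaller
`liminf`. So it remains to show `r ≤ liminf d(uₙ, y)` for every `y`, i.e. that no subsequence of
the orbit has asymptotic radius below `r`. A Goebel–Lim diagonal argument refines any
subsequence to one satisfying the inequality above; its asymptotic center `q` is then a polar
limit, hence a fixed point by the PAR-condition, and `d(uₙ, q)` converges along the whole orbit,
to a limit that is at least `r`.
-/

open Filter Metric ENNReal MeasureTheory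

noncomputable section

variable {E : Type*} [MetricSpace E]

open Topology

def ParCondition (T : E → E) (x : E) : Prop :=
  ∀ y : E, ∀ k : ℕ → ℕ, StrictMono k → (∀ n, 1 ≤ k n) →
    PolarLim (fun n => T^[k n] x) y →
    ∀ ε : ℝ, 0 < ε → ∃ N : ℕ, ∀ n ≥ N,
      dist (T^[k n - 1] x) y < dist (T^[k n] x) y + ε

section Diagonal

def nestedSubseq (F : (ℕ → ℕ) → ℕ → ℕ → ℕ) : ℕ → ℕ → ℕ
  | 0 => id
  | m + 1 => nestedSubseq F m ∘ F (nestedSubseq F m) m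

lemma exists_tendsto_eventually_eq_comp {ψ w : ℕ → ℕ} (hψ : StrictMono ψ)
    (hw : Tendsto w atTop atTop) (h : ∀ᶠ n in atTop, w n ∈ Set.range ψ) :
    ∃ θ : ℕ → ℕ, Tendsto θ atTop atTop ∧ ∀ᶠ n in atTop, w n = ψ (θ n) := by
  have hθ : ∀ᶠ n in atTop, ψ (Function.invFun ψ (w n)) = w n :=
    h.mono fun n hn => Function.invFun_eq hn
  refine ⟨Function.invFun ψ ∘ w, tendsto_atTop.2 fun K => ?_, hθ.mono fun n hn => hn.symm⟩
  filter_upwards [hθ, tendsto_atTop.1 hw (ψ K)] with n hn hK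
  rw [← hn] at hK
  exact hψ.le_iff_le.1 hK

/-- The diagonal argument of Goebel and Lim. -/
theorem exists_strictMono_le_of_diagonal {α : Type*} (M ρ : (ℕ → α) → ℝ)
    (hM : ∀ (u v : ℕ → α) (θ : ℕ → ℕ), Tendsto θ atTop atTop →
      (∀ᶠ n in atTop, v n = u (θ n)) → M v ≤ M u)
    (hρ : ∀ (u v : ℕ → α) (θ : ℕ → ℕ), Tendsto θ atTop atTop →
      (∀ᶠ n in atTop, v n = u (θ n)) → ρ u ≤ ρ v)
    (hMρ : ∀ (u : ℕ → α) (ε : ℝ), 0 < ε → ∃ φ : ℕ → ℕ, StrictMono φ ∧ M (u ∘ φ) < ρ u + ε)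
    (u : ℕ → α) : ∃ ψ : ℕ → ℕ, StrictMono ψ ∧ M (u ∘ ψ) ≤ ρ (u ∘ ψ) := by
  choose F hF_mono hF using fun (ψ : ℕ → ℕ) (m : ℕ) =>
    hMρ (u ∘ ψ) (1 / (m + 1)) Nat.one_div_pos_of_nat
  set ψ := nestedSubseq F
  have hψ_mono : ∀ m, StrictMono (ψ m) := by
    intro m
    induction m with
    | zero => exact strictMono_id
    | succ m ih => exact ih.comp (hF_mono _ _)
  have hψ_range : Antitone fun m => Set.range (ψ m) :=
    antitone_nat_of_succ_le fun m => Set.range_comp_subset_range _ _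
  set D : ℕ → ℕ := fun n => ψ n n
  have hD : StrictMono D := strictMono_nat_of_lt_succ fun n =>
    calc ψ n n < ψ n (n + 1) := hψ_mono n n.lt_succ_self
      _ ≤ ψ n (F (ψ n) n (n + 1)) := (hψ_mono n).monotone (hF_mono _ _).le_apply
  have hD_tail : ∀ m, ∃ θ : ℕ → ℕ, Tendsto θ atTop atTop ∧
      ∀ᶠ n in atTop, (u ∘ D) n = (u ∘ ψ m) (θ n) := by
    intro m
    obtain ⟨θ, hθ, hDθ⟩ := exists_tendsto_eventually_eq_comp (hψ_mono m) hD.tendsto_atTop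
      ((eventually_ge_atTop m).mono fun n hn => hψ_range hn ⟨n, rfl⟩)
    exact ⟨θ, hθ, hDθ.mono fun n hn => congrArg u hn⟩
  refine ⟨D, hD, le_of_forall_pos_le_add fun ε hε => ?_⟩
  obtain ⟨m, hm⟩ := exists_nat_one_div_lt hε
  obtain ⟨θ, hθ, hDθ⟩ := hD_tail m
  obtain ⟨θ', hθ', hDθ'⟩ := hD_tail (m + 1)
  refine le_of_lt <| calc M (u ∘ D) ≤ M (u ∘ ψ m ∘ F (ψ m) m) := hM _ _ θ' hθ' hDθ'
    _ < ρ (u ∘ ψ m) + 1 / (m + 1) := hF _ _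
    _ ≤ ρ (u ∘ D) + ε := add_le_add (hρ _ _ θ hθ hDθ) hm.le

end Diagonal

lemma IsUniformSR.exists_approx_center (hSR : IsUniformSR E) {r d : ℝ} (hr : 0 ≤ r)
    (hd : 0 < d) : ∃ δ > 0, ∀ a b : E, d ≤ dist a b → ∃ w : E, ∀ z : E,
      dist z a ≤ r + δ → dist z b ≤ r + δ → dist z w ≤ r - δ := by
  rcases hr.eq_or_lt with rfl | hr
  · -- no point lies within `d / 3` of both `a` and `b`
    refine ⟨d / 3, by positivity, fun a b hab => ⟨a, fun z ha hb => ?_⟩⟩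
    linarith [dist_triangle_left a b z]
  obtain ⟨δ, hδ_pos, hδ⟩ := hSR
  set δ₀ := δ r d
  have hδ₀ : 0 < δ₀ := hδ_pos r d hr hd
  refine ⟨min δ₀ r / 2, by positivity, fun a b hab => ?_⟩
  have h₁ : min δ₀ r / 2 < δ₀ := by linarith [min_le_left δ₀ r]
  have h₂ : 0 < r - min δ₀ r / 2 := by linarith [min_le_right δ₀ r]
  have hlt : chebyshevRadius (closedBall a (r + δ₀) ∩ closedBall b (r + δ₀)) <
      ENNReal.ofReal (r - min δ₀ r / 2) :=
    (hδ r d hr hd a b hab).trans_lt ((ENNReal.ofReal_lt_ofReal_iff h₂).2 (by linarith))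
  obtain ⟨w, hw⟩ := iInf_lt_iff.1 hlt
  refine ⟨w, fun z ha hb => ?_⟩
  have hz : z ∈ closedBall a (r + δ₀) ∩ closedBall b (r + δ₀) :=
    ⟨mem_closedBall.2 (by linarith), mem_closedBall.2 (by linarith)⟩
  have hwz : edist w z < ENNReal.ofReal (r - min δ₀ r / 2) :=
    (le_iSup₂ (f := fun z (_ : z ∈ _) => edist w z) z hz).trans_lt hw
  rw [edist_dist, ENNReal.ofReal_lt_ofReal_iff h₂, dist_comm] at hwz
  exact hwz.le

-- A real `limsup`, meaningful for bounded sequences only: hence `[BoundedSpace E]` below.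
def asympRadiusAt (u : ℕ → E) (y : E) : ℝ :=
  limsup (fun n => dist (u n) y) atTop

def asympRadius (u : ℕ → E) : ℝ :=
  ⨅ y, asympRadiusAt u y

def lowerAsympRadius (u : ℕ → E) : ℝ :=
  ⨅ y, liminf (fun n => dist (u n) y) atTop

lemma tendsto_dist_iterate_of_isFixedPt {T : E → E} (hT : ∀ u v : E, dist (T u) (T v) ≤ dist u v)
    {q : E} (hq : Function.IsFixedPt T q) (x : E) :
    Tendsto (fun n => dist (T^[n] x) q) atTop (𝓝 (asympRadiusAt (fun n => T^[n] x) q)) := by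
  have hanti : Antitone fun n => dist (T^[n] x) q := antitone_nat_of_succ_le fun n => by
    rw [Function.iterate_succ_apply']
    simpa [hq.eq] using hT (T^[n] x) q
  have hlim := tendsto_atTop_ciInf hanti ⟨0, by rintro _ ⟨n, rfl⟩; exact dist_nonneg⟩
  rwa [asympRadiusAt, hlim.limsup_eq]

lemma isBoundedUnder_ge_dist (l : Filter ℕ) (u : ℕ → E) (y : E) :
    IsBoundedUnder (· ≥ ·) l fun n => dist (u n) y :=
  isBoundedUnder_of ⟨0, fun _ => dist_nonneg⟩

lemma asympRadiusAt_le_of_eventually_le {u : ℕ → E} {y : E} {b : ℝ}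
    (h : ∀ᶠ n in atTop, dist (u n) y ≤ b) : asympRadiusAt u y ≤ b :=
  limsup_le_of_le (isCoboundedUnder_le_of_le atTop fun _ => dist_nonneg) h

section Bounded

variable [BoundedSpace E]

lemma isBoundedUnder_dist (l : Filter ℕ) (u : ℕ → E) (y : E) :
    IsBoundedUnder (· ≤ ·) l fun n => dist (u n) y :=
  isBoundedUnder_of ⟨diam (Set.univ : Set E), fun _ =>
    dist_le_diam_of_mem BoundedSpace.bounded_univ trivial trivial⟩

lemma asympRadiusAt_nonneg (u : ℕ → E) (y : E) : 0 ≤ asympRadiusAt u y :=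
  le_limsup_of_frequently_le (Frequently.of_forall fun _ => dist_nonneg)
    (isBoundedUnder_dist _ u y)

lemma eventually_lt_of_asympRadiusAt_lt {u : ℕ → E} {y : E} {b : ℝ} (h : asympRadiusAt u y < b) :
    ∀ᶠ n in atTop, dist (u n) y < b :=
  eventually_lt_of_limsup_lt h (isBoundedUnder_dist _ u y)

lemma asympRadiusAt_le_of_eventually_le_add {u v : ℕ → E} {y z : E} {c : ℝ}
    (h : ∀ᶠ n in atTop, dist (u n) z ≤ dist (v n) y + c) :
    asympRadiusAt u z ≤ asympRadiusAt v y + c := by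
  refine le_of_forall_pos_le_add fun ε hε => asympRadiusAt_le_of_eventually_le ?_
  filter_upwards [h, eventually_lt_of_asympRadiusAt_lt (lt_add_of_pos_right (asympRadiusAt v y) hε)]
    with n h₁ h₂
  linarith

lemma asympRadiusAt_le_add_dist (u : ℕ → E) (y z : E) :
    asympRadiusAt u z ≤ asympRadiusAt u y + dist y z :=
  asympRadiusAt_le_of_eventually_le_add (Eventually.of_forall fun _ => dist_triangle _ _ _)

lemma asympRadius_le (u : ℕ → E) (y : E) : asympRadius u ≤ asympRadiusAt u y :=
  ciInf_le ⟨0, by rintro _ ⟨z, rfl⟩; exact asympRadiusAt_nonneg u z⟩ y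

lemma asympRadius_nonneg (u : ℕ → E) : 0 ≤ asympRadius u :=
  have : Nonempty E := ⟨u 0⟩
  le_ciInf (asympRadiusAt_nonneg u)

lemma lowerAsympRadius_le (u : ℕ → E) (y : E) :
    lowerAsympRadius u ≤ liminf (fun n => dist (u n) y) atTop :=
  ciInf_le ⟨0, Set.forall_mem_range.2 fun z => le_liminf_of_le
    (isBoundedUnder_dist _ u z).isCoboundedUnder_ge (Eventually.of_forall fun _ => dist_nonneg)⟩ y

lemma asympRadiusAt_le_of_eventually_eq_comp {u v : ℕ → E} {θ : ℕ → ℕ}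
    (hθ : Tendsto θ atTop atTop) (h : ∀ᶠ n in atTop, v n = u (θ n)) (y : E) :
    asympRadiusAt v y ≤ asympRadiusAt u y := by
  rw [asympRadiusAt, limsup_congr (h.mono fun n hn => congrArg (dist · y) hn)]
  exact hθ.limsup_comp_le_limsup (isCoboundedUnder_le_of_le _ fun _ => dist_nonneg)
    (isBoundedUnder_dist _ u y)

lemma asympRadius_le_of_eventually_eq_comp {u v : ℕ → E} {θ : ℕ → ℕ}
    (hθ : Tendsto θ atTop atTop) (h : ∀ᶠ n in atTop, v n = u (θ n)) :
    asympRadius v ≤ asympRadius u :=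
  have : Nonempty E := ⟨u 0⟩
  le_ciInf fun y => (asympRadius_le v y).trans (asympRadiusAt_le_of_eventually_eq_comp hθ h y)

lemma asympRadius_comp_le (u : ℕ → E) {θ : ℕ → ℕ} (hθ : Tendsto θ atTop atTop) :
    asympRadius (u ∘ θ) ≤ asympRadius u :=
  asympRadius_le_of_eventually_eq_comp hθ (Eventually.of_forall fun _ => rfl)

lemma lowerAsympRadius_le_of_eventually_eq_comp {u v : ℕ → E} {θ : ℕ → ℕ}
    (hθ : Tendsto θ atTop atTop) (h : ∀ᶠ n in atTop, v n = u (θ n)) :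
    lowerAsympRadius u ≤ lowerAsympRadius v := by
  have : Nonempty E := ⟨u 0⟩
  refine le_ciInf fun y => (lowerAsympRadius_le u y).trans ?_
  rw [liminf_congr (h.mono fun n hn => congrArg (dist · y) hn)]
  exact hθ.liminf_le_liminf_comp (isBoundedUnder_dist _ _ y).isCoboundedUnder_ge
    (isBoundedUnder_ge_dist _ u y)

lemma exists_strictMono_asympRadius_comp_lt (u : ℕ → E) {ε : ℝ} (hε : 0 < ε) :
    ∃ φ : ℕ → ℕ, StrictMono φ ∧ asympRadius (u ∘ φ) < lowerAsympRadius u + ε := by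
  have : Nonempty E := ⟨u 0⟩
  obtain ⟨y, hy⟩ := exists_lt_of_ciInf_lt (lt_add_of_pos_right (lowerAsympRadius u) (half_pos hε))
  obtain ⟨φ, hφ, hφy⟩ := extraction_of_frequently_atTop
    (frequently_lt_of_liminf_lt (isBoundedUnder_dist _ u y).isCoboundedUnder_ge hy)
  refine ⟨φ, hφ, ?_⟩
  calc asympRadius (u ∘ φ) ≤ asympRadiusAt (u ∘ φ) y := asympRadius_le _ y
    _ ≤ lowerAsympRadius u + ε / 2 :=
      asympRadiusAt_le_of_eventually_le (Eventually.of_forall fun n => (hφy n).le)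
    _ < lowerAsympRadius u + ε := by linarith

lemma exists_strictMono_asympRadius_le_lowerAsympRadius (u : ℕ → E) :
    ∃ ψ : ℕ → ℕ, StrictMono ψ ∧ asympRadius (u ∘ ψ) ≤ lowerAsympRadius (u ∘ ψ) :=
  exists_strictMono_le_of_diagonal asympRadius lowerAsympRadius
    (fun _ _ _ hθ h => asympRadius_le_of_eventually_eq_comp hθ h)
    (fun _ _ _ hθ h => lowerAsympRadius_le_of_eventually_eq_comp hθ h)
    (fun u _ hε => exists_strictMono_asympRadius_comp_lt u hε) u

lemma polarLim_of_asympRadiusAt_le (hSR : IsUniformSR E) {v : ℕ → E} {q : E}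
    (h : asympRadiusAt v q ≤ lowerAsympRadius v) : PolarLim v q := by
  intro y hy
  by_contra! hfreq
  replace hfreq : ∃ᶠ n in atTop, dist (v n) y ≤ dist (v n) q := frequently_atTop.2 hfreq
  set r := asympRadiusAt v q
  obtain ⟨δ, hδ, hcenter⟩ :=
    hSR.exists_approx_center (asympRadiusAt_nonneg v q) (dist_pos.2 (Ne.symm hy))
  obtain ⟨w, hw⟩ := hcenter q y le_rfl
  have hclose : ∀ᶠ n in atTop, dist (v n) q < r + δ :=
    eventually_lt_of_asympRadiusAt_lt (lt_add_of_pos_right r hδ)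
  have hwfreq : ∃ᶠ n in atTop, dist (v n) w ≤ r - δ :=
    (hfreq.and_eventually hclose).mono fun n hn => hw _ hn.2.le (hn.1.trans hn.2.le)
  linarith [liminf_le_of_frequently_le hwfreq (isBoundedUnder_ge_dist _ v w),
    lowerAsympRadius_le v w]

lemma dist_lt_of_asympRadiusAt_lt (hSR : IsUniformSR E) (u : ℕ → E) {θ : ℝ} (hθ : 0 < θ) :
    ∃ η > 0, ∀ a b : E, asympRadiusAt u a < asympRadius u + η →
      asympRadiusAt u b < asympRadius u + η → dist a b < θ := by
  obtain ⟨δ, hδ, hcenter⟩ := hSR.exists_approx_center (asympRadius_nonneg u) hθ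
  refine ⟨δ, hδ, fun a b ha hb => ?_⟩
  by_contra! hab
  obtain ⟨w, hw⟩ := hcenter a b hab
  have hw_le : asympRadiusAt u w ≤ asympRadius u - δ := asympRadiusAt_le_of_eventually_le <| by
    filter_upwards [eventually_lt_of_asympRadiusAt_lt ha, eventually_lt_of_asympRadiusAt_lt hb]
      with n ha hb
    exact hw _ ha.le hb.le
  linarith [asympRadius_le u w]

lemma AsympCenter.asympRadiusAt_eq {u : ℕ → E} {p : E} (hp : AsympCenter u p) :
    asympRadiusAt u p = asympRadius u :=
  have : Nonempty E := ⟨p⟩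
  le_antisymm (le_ciInf hp) (asympRadius_le u p)

lemma AsympCenter.eq_of_asympRadiusAt_le (hSR : IsUniformSR E) {u : ℕ → E} {p q : E}
    (hp : AsympCenter u p) (hq : asympRadiusAt u q ≤ asympRadiusAt u p) : q = p := by
  refine eq_of_forall_dist_le fun θ hθ => ?_
  obtain ⟨η, hη, hclose⟩ := dist_lt_of_asympRadiusAt_lt hSR u hθ
  have := hp.asympRadiusAt_eq
  exact (hclose q p (by linarith) (by linarith)).le

lemma exists_asympCenter [CompleteSpace E] (hSR : IsUniformSR E) (u : ℕ → E) :
    ∃ p : E, AsympCenter u p := by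
  have : Nonempty E := ⟨u 0⟩
  choose z hz using fun k : ℕ => exists_lt_of_ciInf_lt
    (lt_add_of_pos_right (asympRadius u) (Nat.one_div_pos_of_nat (n := k)))
  have hcauchy : CauchySeq z := by
    refine Metric.cauchySeq_iff'.2 fun θ hθ => ?_
    obtain ⟨η, hη, hclose⟩ := dist_lt_of_asympRadiusAt_lt hSR u hθ
    obtain ⟨N, hN⟩ := exists_nat_one_div_lt hη
    refine ⟨N, fun n hn => hclose _ _ ((hz n).trans ?_) ((hz N).trans ?_)⟩
    · linarith [Nat.one_div_le_one_div (α := ℝ) hn]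
    · linarith
  obtain ⟨p, hp⟩ := cauchySeq_tendsto_of_complete hcauchy
  have hlim : Tendsto (fun k : ℕ => asympRadius u + 1 / ((k : ℝ) + 1) + dist (z k) p) atTop
      (𝓝 (asympRadius u)) := by
    simpa using (tendsto_one_div_add_atTop_nhds_zero_nat.const_add (asympRadius u)).add
      (tendsto_iff_dist_tendsto_zero.1 hp)
  have hle : asympRadiusAt u p ≤ asympRadius u := ge_of_tendsto' hlim fun k =>
    (asympRadiusAt_le_add_dist u (z k) p).trans (by linarith [hz k])
  exact ⟨p, fun y => hle.trans (asympRadius_le u y)⟩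

lemma isFixedPt_of_asympCenter_iterate (hSR : IsUniformSR E) {T : E → E}
    (hT : ∀ u v : E, dist (T u) (T v) ≤ dist u v) {x p : E}
    (hp : AsympCenter (fun n => T^[n] x) p) : Function.IsFixedPt T p := by
  refine hp.eq_of_asympRadiusAt_le hSR ?_
  calc asympRadiusAt (fun n => T^[n] x) (T p)
      = asympRadiusAt (fun n => T^[n + 1] x) (T p) := (limsup_nat_add _ 1).symm
    _ ≤ asympRadiusAt (fun n => T^[n] x) p + 0 := asympRadiusAt_le_of_eventually_le_add <|
        Eventually.of_forall fun n => by
          rw [Function.iterate_succ_apply', add_zero]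
          exact hT _ _
    _ = asympRadiusAt (fun n => T^[n] x) p := add_zero _

lemma isFixedPt_of_parCondition (hSR : IsUniformSR E) {T : E → E}
    (hT : ∀ u v : E, dist (T u) (T v) ≤ dist u v) {x q : E} (hPAR : ParCondition T x)
    {k : ℕ → ℕ} (hk : StrictMono k) (hk1 : ∀ n, 1 ≤ k n)
    (hq : AsympCenter (fun n => T^[k n] x) q) (hpolar : PolarLim (fun n => T^[k n] x) q) :
    Function.IsFixedPt T q := by
  refine hq.eq_of_asympRadiusAt_le hSR (le_of_forall_pos_le_add fun ε hε => ?_)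
  obtain ⟨N, hN⟩ := hPAR q k hk hk1 hpolar ε hε
  refine asympRadiusAt_le_of_eventually_le_add ((eventually_ge_atTop N).mono fun n hn => ?_)
  calc dist (T^[k n] x) (T q) = dist (T (T^[k n - 1] x)) (T q) := by
        rw [← Function.iterate_succ_apply' T, Nat.succ_eq_add_one, Nat.sub_add_cancel (hk1 n)]
    _ ≤ dist (T^[k n - 1] x) q := hT _ _
    _ ≤ dist (T^[k n] x) q + ε := (hN n hn).le

lemma asympRadius_iterate_le_comp (hSR : IsUniformSR E) [CompleteSpace E] {T : E → E}
    (hT : ∀ u v : E, dist (T u) (T v) ≤ dist u v) {x : E} (hPAR : ParCondition T x)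
    {k : ℕ → ℕ} (hk : StrictMono k) (hk1 : ∀ n, 1 ≤ k n) :
    asympRadius (fun n => T^[n] x) ≤ asympRadius (fun n => T^[k n] x) := by
  obtain ⟨ψ, hψ, hreg⟩ := exists_strictMono_asympRadius_le_lowerAsympRadius fun n => T^[k n] x
  obtain ⟨q, hq⟩ := exists_asympCenter hSR fun n => T^[k (ψ n)] x
  have hTq := isFixedPt_of_parCondition hSR hT hPAR (hk.comp hψ) (fun n => hk1 _) hq
    (polarLim_of_asympRadiusAt_le hSR (hq.asympRadiusAt_eq.trans_le hreg))
  calc asympRadius (fun n => T^[n] x) ≤ asympRadiusAt (fun n => T^[n] x) q := asympRadius_le _ q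
    _ = asympRadiusAt (fun n => T^[k (ψ n)] x) q :=
      ((tendsto_dist_iterate_of_isFixedPt hT hTq x).comp (hk.comp hψ).tendsto_atTop).limsup_eq.symm
    _ = asympRadius (fun n => T^[k (ψ n)] x) := hq.asympRadiusAt_eq
    _ ≤ asympRadius (fun n => T^[k n] x) :=
      asympRadius_comp_le (fun n => T^[k n] x) hψ.tendsto_atTop

lemma asympRadius_iterate_le_lowerAsympRadius (hSR : IsUniformSR E) [CompleteSpace E]
    {T : E → E} (hT : ∀ u v : E, dist (T u) (T v) ≤ dist u v) {x : E} (hPAR : ParCondition T x) :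
    asympRadius (fun n => T^[n] x) ≤ lowerAsympRadius (fun n => T^[n] x) := by
  refine le_of_forall_pos_le_add fun ε hε => ?_
  obtain ⟨φ, hφ, hφε⟩ := exists_strictMono_asympRadius_comp_lt (fun n => T^[n] x) hε
  calc asympRadius (fun n => T^[n] x) ≤ asympRadius (fun n => T^[φ (n + 1)] x) :=
        asympRadius_iterate_le_comp hSR hT hPAR (fun _ _ h => hφ (Nat.succ_lt_succ h))
          fun n => Nat.one_le_of_lt (hφ n.succ_pos)
    _ ≤ asympRadius fun n => T^[φ n] x :=
        asympRadius_comp_le (fun n => T^[φ n] x) (tendsto_add_atTop_nat 1)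
    _ ≤ lowerAsympRadius (fun n => T^[n] x) + ε := hφε.le

end Bounded

/-- in a bounded complete uniform SR space, if `T` is nonexpansive and
satisfies the PAR-condition at `x`, then the iterations sequence polarly converges to a
fixed point of `T`. -/
theorem stmt_17 [CompleteSpace E] (hBdd : Bornology.IsBounded (Set.univ : Set E))
    (hSR : IsUniformSR E) (x : E) (T : E → E)
    (hT : ∀ u v : E, dist (T u) (T v) ≤ dist u v)
    (hPAR : ∀ y : E, ∀ k : ℕ → ℕ, StrictMono k → (∀ n, 1 ≤ k n) →
      PolarLim (fun n => T^[k n] x) y →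
      ∀ ε : ℝ, 0 < ε → ∃ N : ℕ, ∀ n ≥ N,
        dist (T^[k n - 1] x) y < dist (T^[k n] x) y + ε) :
    ∃ p : E, PolarLim (fun n => T^[n] x) p ∧ T p = p := by
  have : BoundedSpace E := Bornology.isBounded_univ.1 hBdd
  obtain ⟨p, hp⟩ := exists_asympCenter hSR fun n => T^[n] x
  refine ⟨p, polarLim_of_asympRadiusAt_le hSR ?_, isFixedPt_of_asympCenter_iterate hSR hT hp⟩
  exact hp.asympRadiusAt_eq.trans_le (asympRadius_iterate_le_lowerAsympRadius hSR hT hPAR)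
end
end

section
/- Let (Ω,μ) be a measure space and let p ∈ ℝ with p ≥ 3. Let (u_n) be a sequence in L^p(Ω,μ) and u ∈ L^p(Ω,μ). Assume that u_n converges weakly to u in L^p(Ω,μ) (i.e. ∫_Ω u_n v dμ → ∫_Ω u v dμ for every v ∈ L^{p'}(Ω,μ), where 1/p + 1/p' = 1) and that u is a polar limit of (u_n) with respect to the L^p norm metric. Then ∫_Ω |u_n|^p dμ ≥ ∫_Ω |u|^p dμ + ∫_Ω |u_n − u|^p dμ + o(1) as n → ∞, i.e. liminf_n ( ∫_Ω |u_n|^p dμ − ∫_Ω |u|^p dμ − ∫_Ω |u_n − u|^p dμ ) ≥ 0. -/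
/-!
Write `h_n = u_n - U` and `J(x) = |x|^(p-2) x` (`dualPow p`). For `p ≥ 3` the elementary
inequality `|x + y|^p ≥ |x|^p + |y|^p + p J(x) y + p J(y) x`, integrated with `x = U`, `y = h_n`,
gives `‖u_n‖^p - ‖U‖^p - ‖h_n‖^p ≥ p ∫ J(U) h_n + p ∫ J(h_n) U`. The first integral tends to `0`
because `J(U) ∈ L^q` and `h_n ⇀ 0`. For the second, polarity at the point `(1 - t) U` says that
eventually `‖h_n‖ ≤ ‖h_n + t U‖`; expanding `|h_n + t U|^p` to second order in `t` turns this into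
`p ∫ J(h_n) U ≥ -t K`, with `K` controlled by a bound on `‖h_n‖`, which exists by the uniform
boundedness principle. Letting `t → 0` gives the claim.
-/

open Filter Metric ENNReal MeasureTheory

noncomputable section

variable {E : Type*} [MetricSpace E]

section Pointwise

/-- `dualPow p ∘ f` is the function of `L^q` that norms `f ∈ L^p`. -/
def dualPow (p x : ℝ) : ℝ := |x| ^ (p - 2) * x

variable {p : ℝ}

lemma measurable_dualPow (p : ℝ) : Measurable (dualPow p) := by
  unfold dualPow; fun_prop

lemma abs_rpow_sub_two_mul_sq (hp : p ≠ 0) (x : ℝ) : |x| ^ (p - 2) * x ^ 2 = |x| ^ p := by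
  rw [← sq_abs, ← Real.rpow_add_natCast' (abs_nonneg x) (by simpa using hp)]
  norm_num

lemma mul_dualPow_self (hp : p ≠ 0) (x : ℝ) : x * dualPow p x = |x| ^ p := by
  rw [dualPow, ← abs_rpow_sub_two_mul_sq hp]; ring

lemma abs_dualPow (hp : 1 < p) (x : ℝ) : |dualPow p x| = |x| ^ (p - 1) := by
  rw [dualPow, abs_mul, abs_of_nonneg (by positivity),
    ← Real.rpow_add_one' (abs_nonneg x) (by linarith)]
  ring_nf

lemma dualPow_of_nonneg (hp : 1 < p) {x : ℝ} (hx : 0 ≤ x) : dualPow p x = x ^ (p - 1) := by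
  rw [← abs_of_nonneg hx, ← abs_dualPow hp, abs_of_nonneg hx, abs_of_nonneg]
  exact mul_nonneg (by positivity) hx

lemma dualPow_neg (x : ℝ) : dualPow p (-x) = -dualPow p x := by
  simp [dualPow]

lemma rpow_mul_rpow_le_add_rpow {s x y : ℝ} (hp : 0 < p) (hx : 0 ≤ x) (hy : 0 ≤ y) (hs : 0 ≤ s)
    (hsp : s ≤ p) : x ^ s * y ^ (p - s) ≤ x ^ p + y ^ p := by
  rcases le_total x y with hxy | hyx
  · calc x ^ s * y ^ (p - s) ≤ y ^ s * y ^ (p - s) := by gcongr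
      _ = y ^ p := by rw [← Real.rpow_add' hy (by linarith), add_sub_cancel]
      _ ≤ x ^ p + y ^ p := by linarith [Real.rpow_nonneg hx p]
  · calc x ^ s * y ^ (p - s) ≤ x ^ s * x ^ (p - s) := by gcongr
      _ = x ^ p := by rw [← Real.rpow_add' hx (by linarith), add_sub_cancel]
      _ ≤ x ^ p + y ^ p := by linarith [Real.rpow_nonneg hy p]

/-- The tangent-line inequality for `x ↦ x ^ (r + 1)` at `a`, multiplied out. -/
lemma rpow_mul_add_le {r a b : ℝ} (hr : 0 ≤ r) (ha : 0 ≤ a) (hab : 0 ≤ a + b) :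
    a ^ r * (a + (r + 1) * b) ≤ (a + b) ^ r * (a + b) := by
  rcases ha.eq_or_lt with rfl | ha
  · rcases hr.eq_or_lt with rfl | hr
    · simp
    · rw [zero_add] at hab
      simp only [Real.zero_rpow hr.ne', zero_mul, zero_add]
      positivity
  · have hba : -1 ≤ b / a := by rw [le_div_iff₀ ha]; linarith
    have hbern := one_add_mul_self_le_rpow_one_add hba (by linarith : 1 ≤ r + 1)
    have hsum : a * (1 + b / a) = a + b := by field_simp
    calc a ^ r * (a + (r + 1) * b) = (a ^ r * a) * (1 + (r + 1) * (b / a)) := by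
          field_simp
      _ ≤ (a ^ r * a) * (1 + b / a) ^ (r + 1) := by gcongr
      _ = (a + b) ^ r * (a + b) := by
          rw [← Real.rpow_add_one ha.ne', ← Real.mul_rpow ha.le (by linarith), hsum,
            Real.rpow_add_one' hab (by linarith)]

lemma rpow_add_rpow_add_cross_le_add_rpow (hp : 3 ≤ p) {a b : ℝ} (ha : 0 ≤ a) (hb : 0 ≤ b) :
    a ^ p + b ^ p + p * a ^ (p - 1) * b + p * b ^ (p - 1) * a ≤ (a + b) ^ p := by
  obtain ⟨r, hr, rfl⟩ : ∃ r, 0 ≤ r ∧ p = r + 3 := ⟨p - 3, by linarith, by ring⟩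
  have split : ∀ x : ℝ, 0 ≤ x → x ^ (r + 3) = x ^ r * x ^ 3 ∧ x ^ (r + 3 - 1) = x ^ r * x ^ 2 :=
    fun x hx => ⟨by exact_mod_cast Real.rpow_add_natCast' hx (by positivity : r + (3 : ℕ) ≠ 0),
      by rw [show r + 3 - 1 = r + (2 : ℕ) by push_cast; ring]
         exact Real.rpow_add_natCast' hx (by positivity)⟩
  obtain ⟨ha3, ha2⟩ := split a ha
  obtain ⟨hb3, hb2⟩ := split b hb
  rw [ha3, ha2, hb3, hb2, (split (a + b) (by positivity)).1]
  have hta := rpow_mul_add_le hr ha (by positivity : 0 ≤ a + b)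
  have htb := rpow_mul_add_le hr hb (by positivity : 0 ≤ b + a)
  rw [add_comm b a] at htb
  have hma : a ^ r ≤ (a + b) ^ r := Real.rpow_le_rpow ha (by linarith) hr
  have hmb : b ^ r ≤ (a + b) ^ r := Real.rpow_le_rpow hb (by linarith) hr
  have := mul_nonneg ha hb
  linear_combination a ^ 2 * hta + b ^ 2 * htb + (2 * a ^ 2 * b) * hma + (2 * a * b ^ 2) * hmb

lemma rpow_add_rpow_le_sub_rpow_add_cross (hp : 1 ≤ p) {a b : ℝ} (hb : 0 ≤ b) (hba : b ≤ a) :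
    a ^ p + b ^ p ≤ (a - b) ^ p + p * a ^ (p - 1) * b + p * b ^ (p - 1) * a := by
  obtain ⟨r, hr, rfl⟩ : ∃ r, 0 ≤ r ∧ p = r + 1 := ⟨p - 1, by linarith, by ring⟩
  have ha : 0 ≤ a := hb.trans hba
  rw [add_sub_cancel_right, Real.rpow_add_one' ha (by linarith),
    Real.rpow_add_one' hb (by linarith), Real.rpow_add_one' (by linarith) (by linarith)]
  have htangent := rpow_mul_add_le hr ha (by linarith : 0 ≤ a + -b)
  rw [← sub_eq_add_neg] at htangent
  have hbr : 0 ≤ b ^ r := by positivity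
  nlinarith [mul_le_mul_of_nonneg_left hba hbr, mul_nonneg hbr ha]

lemma le_abs_add_rpow (hp : 3 ≤ p) (x y : ℝ) :
    |x| ^ p + |y| ^ p + p * (dualPow p x * y) + p * (dualPow p y * x) ≤ |x + y| ^ p := by
  wlog hx : 0 ≤ x generalizing x y
  · have h := this (-x) (-y) (by linarith)
    rwa [abs_neg, abs_neg, ← neg_add, abs_neg, dualPow_neg, dualPow_neg, neg_mul_neg,
      neg_mul_neg] at h
  have hp1 : 1 < p := by linarith
  rcases le_total 0 y with hy | hy
  · rw [abs_of_nonneg hx, abs_of_nonneg hy, abs_of_nonneg (add_nonneg hx hy),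
      dualPow_of_nonneg hp1 hx, dualPow_of_nonneg hp1 hy]
    linarith [rpow_add_rpow_add_cross_le_add_rpow hp hx hy]
  obtain ⟨b, hb, rfl⟩ : ∃ b, 0 ≤ b ∧ y = -b := ⟨-y, by linarith, by ring⟩
  rw [dualPow_neg, dualPow_of_nonneg hp1 hx, dualPow_of_nonneg hp1 hb, abs_neg,
    abs_of_nonneg hx, abs_of_nonneg hb, ← sub_eq_add_neg]
  rcases le_total b x with hbx | hxb
  · rw [abs_of_nonneg (by linarith)]
    linarith [rpow_add_rpow_le_sub_rpow_add_cross hp1.le hb hbx]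
  · rw [abs_of_nonpos (by linarith), neg_sub]
    linarith [rpow_add_rpow_le_sub_rpow_add_cross hp1.le hx hxb]

lemma one_add_rpow_le (hp : 2 ≤ p) {θ : ℝ} (h1 : -1 ≤ θ) (h2 : θ ≤ 1) :
    (1 + θ) ^ p ≤ 1 + p * θ + p * (p - 1) * 2 ^ (p - 2) * θ ^ 2 := by
  have hθ : 0 ≤ 1 + θ := by linarith
  have hsucc : ∀ s : ℝ, 0 ≤ s → (1 + θ) ^ (s + 1) = (1 + θ) ^ s * (1 + θ) :=
    fun s hs => Real.rpow_add_one' hθ (by linarith)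
  have hp_eq : (1 + θ) ^ p = (1 + θ) ^ (p - 1) * (1 + θ) := by
    rw [← hsucc _ (by linarith), sub_add_cancel]
  have hp1_eq : (1 + θ) ^ (p - 1) = (1 + θ) ^ (p - 2) * (1 + θ) := by
    rw [← hsucc _ (by linarith)]; ring_nf
  -- the tangent line of `x ↦ x ^ p` at `1 + θ`, evaluated at `1`
  have htangent := rpow_mul_add_le (by linarith : 0 ≤ p - 1) hθ (by linarith : 0 ≤ 1 + θ + -θ)
  rw [sub_add_cancel, add_neg_cancel_right, Real.one_rpow, mul_one] at htangent
  have h2p : 1 ≤ (2 : ℝ) ^ (p - 2) := Real.one_le_rpow (by norm_num) (by linarith)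
  have hpos : 0 ≤ p * (p - 1) := by nlinarith
  suffices θ * ((1 + θ) ^ (p - 1) - 1) ≤ (p - 1) * 2 ^ (p - 2) * θ ^ 2 by nlinarith
  rcases le_total 0 θ with hθ0 | hθ0
  · have h := rpow_mul_add_le (by linarith : 0 ≤ p - 2) hθ (by linarith : 0 ≤ 1 + θ + -θ)
    rw [add_neg_cancel_right, Real.one_rpow, mul_one, show p - 2 + 1 = p - 1 by ring] at h
    have hle : (1 + θ) ^ (p - 2) ≤ 2 ^ (p - 2) := Real.rpow_le_rpow hθ (by linarith) (by linarith)
    nlinarith [mul_le_mul_of_nonneg_left hle (by nlinarith : 0 ≤ (p - 1) * θ ^ 2)]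
  · have h := rpow_mul_add_le (by linarith : 0 ≤ p - 2) zero_le_one hθ
    rw [show p - 2 + 1 = p - 1 by ring, Real.one_rpow, one_mul, ← hp1_eq] at h
    nlinarith [mul_le_mul_of_nonneg_left h2p (by nlinarith : 0 ≤ (p - 1) * θ ^ 2)]

lemma abs_add_rpow_le_of_abs_le (hp : 2 ≤ p) {a b : ℝ} (hba : |b| ≤ |a|) :
    |a + b| ^ p ≤
      |a| ^ p + p * (dualPow p a * b) + p * (p - 1) * 2 ^ (p - 2) * (|a| ^ (p - 2) * b ^ 2) := by
  have hp0 : p ≠ 0 := by linarith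
  rcases eq_or_ne a 0 with rfl | ha
  · obtain rfl : b = 0 := abs_nonpos_iff.mp (by simpa using hba)
    simp [Real.zero_rpow hp0]
  obtain ⟨θ, rfl⟩ : ∃ θ, b = a * θ := ⟨b / a, by field_simp⟩
  have hθ : |θ| ≤ 1 := by
    rwa [abs_mul, mul_le_iff_le_one_right (abs_pos.mpr ha)] at hba
  obtain ⟨hθ1, hθ2⟩ := abs_le.mp hθ
  have hlhs : |a + a * θ| ^ p = |a| ^ p * (1 + θ) ^ p := by
    rw [show a + a * θ = a * (1 + θ) by ring, abs_mul, abs_of_nonneg (by linarith : 0 ≤ 1 + θ),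
      Real.mul_rpow (abs_nonneg a) (by linarith)]
  have hlin : dualPow p a * (a * θ) = |a| ^ p * θ := by
    rw [← mul_dualPow_self hp0]; ring
  have hquad : |a| ^ (p - 2) * (a * θ) ^ 2 = |a| ^ p * θ ^ 2 := by
    rw [← abs_rpow_sub_two_mul_sq hp0]; ring
  rw [hlhs, hlin, hquad]
  linarith [mul_le_mul_of_nonneg_left (one_add_rpow_le hp hθ1 hθ2) (by positivity : 0 ≤ |a| ^ p)]

lemma abs_add_rpow_le_of_le_abs (hp : 2 ≤ p) {a b : ℝ} (hab : |a| ≤ |b|) :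
    |a + b| ^ p ≤ |a| ^ p + p * (dualPow p a * b) + (2 ^ p + p) * |b| ^ p := by
  have hp0 : p ≠ 0 := by linarith
  have hsum : |a + b| ^ p ≤ 2 ^ p * |b| ^ p := by
    rw [← Real.mul_rpow (by norm_num) (abs_nonneg b)]
    exact Real.rpow_le_rpow (abs_nonneg _) (by linarith [abs_add_le a b]) (by linarith)
  have hcross : |dualPow p a * b| ≤ |b| ^ p := by
    calc |dualPow p a * b| = |a| ^ (p - 1) * |b| := by rw [abs_mul, abs_dualPow (by linarith)]
      _ ≤ |b| ^ (p - 1) * |b| := by gcongr; linarith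
      _ = |b| ^ p := by
        rw [← abs_dualPow (by linarith), ← abs_mul, mul_comm, mul_dualPow_self hp0,
          abs_of_nonneg (by positivity)]
  nlinarith [neg_abs_le (dualPow p a * b), (by positivity : 0 ≤ |a| ^ p)]

lemma abs_add_rpow_le (hp : 2 ≤ p) (a b : ℝ) :
    |a + b| ^ p ≤ |a| ^ p + p * (dualPow p a * b) +
      (p ^ 2 * 2 ^ p + p) * (|a| ^ (p - 2) * b ^ 2 + |b| ^ p) := by
  have h2p : (2 : ℝ) ^ (p - 2) ≤ 2 ^ p :=
    Real.rpow_le_rpow_of_exponent_le (by norm_num) (by linarith)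
  have hmid : 0 ≤ |a| ^ (p - 2) * b ^ 2 := by positivity
  have hbp : 0 ≤ |b| ^ p := by positivity
  have hK : 0 ≤ p ^ 2 * 2 ^ p + p := by positivity
  rcases le_total |b| |a| with hba | hab
  · have hC : p * (p - 1) * 2 ^ (p - 2) ≤ p ^ 2 * 2 ^ p + p := by
      nlinarith [mul_le_mul_of_nonneg_left h2p (by nlinarith : 0 ≤ p * (p - 1)),
        mul_nonneg (by linarith : 0 ≤ p) (by positivity : (0 : ℝ) ≤ 2 ^ p)]
    nlinarith [abs_add_rpow_le_of_abs_le hp hba, mul_le_mul_of_nonneg_right hC hmid,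
      mul_nonneg hK hbp]
  · have hC : 2 ^ p + p ≤ p ^ 2 * 2 ^ p + p := by
      nlinarith [mul_le_mul_of_nonneg_right (by nlinarith : (1 : ℝ) ≤ p ^ 2)
        (by positivity : (0 : ℝ) ≤ 2 ^ p)]
    nlinarith [abs_add_rpow_le_of_le_abs hp hab, mul_le_mul_of_nonneg_right hC hbp,
      mul_nonneg hK hmid]

lemma abs_add_mul_rpow_le (hp : 2 ≤ p) {t : ℝ} (ht0 : 0 ≤ t) (ht1 : t ≤ 1) (a c : ℝ) :
    |a + t * c| ^ p ≤ |a| ^ p + t * (p * (dualPow p a * c)) +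
      t ^ 2 * ((p ^ 2 * 2 ^ p + p) * (|a| ^ p + 2 * |c| ^ p)) := by
  have hK : 0 ≤ p ^ 2 * 2 ^ p + p := by positivity
  have hmid : |a| ^ (p - 2) * c ^ 2 ≤ |a| ^ p + |c| ^ p := by
    have := rpow_mul_rpow_le_add_rpow (p := p) (by linarith) (abs_nonneg a) (abs_nonneg c)
      (by linarith : 0 ≤ p - 2) (by linarith)
    rwa [show p - (p - 2) = (2 : ℕ) by push_cast; ring, Real.rpow_natCast, sq_abs] at this
  have htp : |t * c| ^ p ≤ t ^ 2 * |c| ^ p := by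
    rw [abs_mul, abs_of_nonneg ht0, Real.mul_rpow ht0 (abs_nonneg c), ← Real.rpow_two]
    exact mul_le_mul_of_nonneg_right
      (Real.rpow_le_rpow_of_exponent_ge' ht0 ht1 (by norm_num) hp) (by positivity)
  have h := abs_add_rpow_le hp a (t * c)
  have hc : 0 ≤ |c| ^ p := by positivity
  nlinarith [mul_le_mul_of_nonneg_left hmid (mul_nonneg hK (sq_nonneg t)),
    mul_le_mul_of_nonneg_left htp hK]

end Pointwise

lemma liminf_nonneg_of_eventually_ge_neg {ι : Type*} {l : Filter ι} {A : ι → ℝ}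
    (h : ∀ ε > 0, ∀ᶠ n in l, -ε ≤ A n) : 0 ≤ liminf A l := by
  by_cases hcob : IsCoboundedUnder (· ≥ ·) l A
  · exact le_of_forall_pos_le_add fun ε hε => by linarith [le_liminf_of_le hcob (h ε hε)]
  · rw [liminf_eq]
    exact (Real.sSup_of_not_bddAbove fun ⟨b, hb⟩ => hcob ⟨b, fun a ha => hb ha⟩).ge

lemma PolarLim.eventually_dist_le {X : Type*} [MetricSpace X] {x : ℕ → X} {c : X}
    (h : PolarLim x c) (y : X) : ∀ᶠ n in atTop, dist (x n) c ≤ dist (x n) y := by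
  rcases eq_or_ne y c with rfl | hy
  · exact Eventually.of_forall fun n => le_rfl
  · obtain ⟨M, hM⟩ := h y hy
    exact eventually_atTop.2 ⟨M, fun n hn => (hM n hn).le⟩

section Lp

variable {Ω : Type*} [MeasurableSpace Ω] {μ : Measure Ω} {p q : ℝ}

lemma eLpNorm_dualPow (hpq : p.HolderConjugate q) (g : Ω → ℝ) :
    eLpNorm (fun a => dualPow p (g a)) (ENNReal.ofReal q) μ =
      eLpNorm g (ENNReal.ofReal p) μ ^ (p - 1) := by
  have hnorm : (fun a => ‖dualPow p (g a)‖) = fun a => ‖g a‖ ^ (p - 1) := by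
    ext a; simp only [Real.norm_eq_abs, abs_dualPow hpq.lt]
  rw [← eLpNorm_norm, hnorm, eLpNorm_norm_rpow _ hpq.sub_one_pos,
    ← ENNReal.ofReal_mul hpq.symm.nonneg, mul_comm, hpq.sub_one_mul_conj]

namespace MeasureTheory.Lp

lemma integral_abs_rpow (hp : 0 < p) (f : Lp ℝ (ENNReal.ofReal p) μ) :
    ∫ a, |f a| ^ p ∂μ = ‖f‖ ^ p := by
  have h := (Lp.memLp f).eLpNorm_eq_integral_rpow_norm (by simpa using hp) ofReal_ne_top
  rw [Lp.norm_def, h, toReal_ofReal (by positivity), toReal_ofReal hp.le,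
    ← Real.rpow_mul (by positivity), inv_mul_cancel₀ hp.ne', Real.rpow_one]
  simp [Real.norm_eq_abs]

lemma integrable_abs_rpow (hp : 0 < p) (f : Lp ℝ (ENNReal.ofReal p) μ) :
    Integrable (fun a => |f a| ^ p) μ := by
  simpa [Real.norm_eq_abs, toReal_ofReal hp.le] using
    (Lp.memLp f).integrable_norm_rpow (by simpa using hp) ofReal_ne_top

lemma integrable_dualPow_mul (hp : 1 < p) (f g : Lp ℝ (ENNReal.ofReal p) μ) :
    Integrable (fun a => dualPow p (f a) * g a) μ := by
  refine ((integrable_abs_rpow (by linarith) f).add (integrable_abs_rpow (by linarith) g)).mono'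
    (((measurable_dualPow p).comp_aemeasurable (Lp.aestronglyMeasurable f).aemeasurable).mul
      (Lp.aestronglyMeasurable g).aemeasurable).aestronglyMeasurable (ae_of_all _ fun a => ?_)
  have := rpow_mul_rpow_le_add_rpow (by linarith) (abs_nonneg (f a)) (abs_nonneg (g a))
    (by linarith : 0 ≤ p - 1) (by linarith)
  rw [show p - (p - 1) = 1 by ring, Real.rpow_one] at this
  rwa [Real.norm_eq_abs, abs_mul, abs_dualPow hp, Pi.add_apply]

lemma integral_dualPow_mul_self (hp : 0 < p) (f : Lp ℝ (ENNReal.ofReal p) μ) :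
    ∫ a, dualPow p (f a) * f a ∂μ = ‖f‖ ^ p := by
  simp_rw [mul_comm (dualPow p _), mul_dualPow_self hp.ne']
  exact integral_abs_rpow hp f

lemma le_norm_add_rpow (hp : 3 ≤ p) (f g : Lp ℝ (ENNReal.ofReal p) μ) :
    ‖f‖ ^ p + ‖g‖ ^ p + p * ∫ a, dualPow p (f a) * g a ∂μ + p * ∫ a, dualPow p (g a) * f a ∂μ ≤
      ‖f + g‖ ^ p := by
  have hp0 : 0 < p := by linarith
  have hF := integrable_abs_rpow hp0 f
  have hG := integrable_abs_rpow hp0 g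
  have hFG := (integrable_dualPow_mul (by linarith) f g).const_mul p
  have hGF := (integrable_dualPow_mul (by linarith) g f).const_mul p
  have h : ∫ a, (|f a| ^ p + |g a| ^ p + p * (dualPow p (f a) * g a) +
      p * (dualPow p (g a) * f a)) ∂μ ≤ ∫ a, |(f + g) a| ^ p ∂μ := by
    refine integral_mono_ae (((hF.add hG).add hFG).add hGF) (integrable_abs_rpow hp0 (f + g)) ?_
    filter_upwards [Lp.coeFn_add f g] with a ha
    rw [ha]
    exact le_abs_add_rpow hp (f a) (g a)
  rwa [integral_add (by fun_prop) hGF, integral_add (by fun_prop) hFG, integral_add hF hG,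
    integral_const_mul, integral_const_mul, integral_abs_rpow hp0, integral_abs_rpow hp0,
    integral_abs_rpow hp0] at h

lemma norm_add_smul_rpow_le (hp : 2 ≤ p) {t : ℝ} (ht0 : 0 ≤ t) (ht1 : t ≤ 1)
    (f g : Lp ℝ (ENNReal.ofReal p) μ) :
    ‖f + t • g‖ ^ p ≤ ‖f‖ ^ p + t * (p * ∫ a, dualPow p (f a) * g a ∂μ) +
      t ^ 2 * ((p ^ 2 * 2 ^ p + p) * (‖f‖ ^ p + 2 * ‖g‖ ^ p)) := by
  have hp0 : 0 < p := by linarith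
  have hF := integrable_abs_rpow hp0 f
  have hG := integrable_abs_rpow hp0 g
  have hFG := ((integrable_dualPow_mul (by linarith) f g).const_mul p).const_mul t
  have h : ∫ a, |(f + t • g) a| ^ p ∂μ ≤ ∫ a, (|f a| ^ p + t * (p * (dualPow p (f a) * g a)) +
      t ^ 2 * ((p ^ 2 * 2 ^ p + p) * (|f a| ^ p + 2 * |g a| ^ p))) ∂μ := by
    refine integral_mono_ae (integrable_abs_rpow hp0 (f + t • g)) (by fun_prop) ?_
    filter_upwards [Lp.coeFn_add f (t • g), Lp.coeFn_smul t g] with a hadd hsmul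
    rw [hadd, Pi.add_apply, hsmul, Pi.smul_apply, smul_eq_mul]
    exact abs_add_mul_rpow_le hp ht0 ht1 (f a) (g a)
  rwa [integral_add (by fun_prop) (by fun_prop), integral_add hF hFG, integral_const_mul,
    integral_const_mul, integral_const_mul, integral_const_mul, integral_add hF (by fun_prop),
    integral_const_mul, integral_abs_rpow hp0, integral_abs_rpow hp0, integral_abs_rpow hp0] at h

lemma memLp_dualPow (hpq : p.HolderConjugate q) (f : Lp ℝ (ENNReal.ofReal p) μ) :
    MemLp (fun a => dualPow p (f a)) (ENNReal.ofReal q) μ :=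
  ⟨((measurable_dualPow p).comp_aemeasurable
      (Lp.aestronglyMeasurable f).aemeasurable).aestronglyMeasurable, by
    rw [eLpNorm_dualPow hpq]
    exact ENNReal.rpow_lt_top_of_nonneg hpq.sub_one_pos.le (Lp.eLpNorm_ne_top f)⟩

lemma norm_toLp_dualPow (hpq : p.HolderConjugate q) (f : Lp ℝ (ENNReal.ofReal p) μ) :
    ‖(memLp_dualPow hpq f).toLp _‖ = ‖f‖ ^ (p - 1) := by
  rw [Lp.norm_toLp, eLpNorm_dualPow hpq, ← ENNReal.toReal_rpow, ← Lp.norm_def]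

lemma integral_mul_toLp_dualPow (hpq : p.HolderConjugate q) (f g : Lp ℝ (ENNReal.ofReal p) μ) :
    ∫ a, g a * ((memLp_dualPow hpq f).toLp _ : Ω → ℝ) a ∂μ = ∫ a, dualPow p (f a) * g a ∂μ := by
  refine integral_congr_ae ?_
  filter_upwards [(memLp_dualPow hpq f).coeFn_toLp] with a ha
  rw [ha, mul_comm]

lemma norm_le_of_forall_abs_integral_mul_le [Fact (1 ≤ ENNReal.ofReal p)]
    (hpq : p.HolderConjugate q) (f : Lp ℝ (ENNReal.ofReal p) μ) {M : ℝ} (hM0 : 0 ≤ M)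
    (hM : ∀ v : Lp ℝ (ENNReal.ofReal q) μ, |∫ a, f a * v a ∂μ| ≤ M * ‖v‖) : ‖f‖ ≤ M := by
  have hpow : ‖f‖ ^ (p - 1) * ‖f‖ ≤ ‖f‖ ^ (p - 1) * M := by
    have h := hM ((memLp_dualPow hpq f).toLp _)
    rw [integral_mul_toLp_dualPow hpq, norm_toLp_dualPow hpq, integral_dualPow_mul_self hpq.pos,
      abs_of_nonneg (by positivity)] at h
    rwa [← Real.rpow_add_one' (norm_nonneg f) (by linarith [hpq.lt]), sub_add_cancel, mul_comm]
  rcases (norm_nonneg f).eq_or_lt with h0 | hpos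
  · rw [← h0]; exact hM0
  · exact le_of_mul_le_mul_left hpow (Real.rpow_pos_of_pos hpos _)

lemma exists_norm_le_of_tendsto_integral_mul [Fact (1 ≤ ENNReal.ofReal p)]
    [Fact (1 ≤ ENNReal.ofReal q)] (hpq : p.HolderConjugate q) {u : ℕ → Lp ℝ (ENNReal.ofReal p) μ}
    {ℓ : Lp ℝ (ENNReal.ofReal q) μ → ℝ}
    (h : ∀ v, Tendsto (fun n => ∫ a, u n a * v a ∂μ) atTop (nhds (ℓ v))) :
    ∃ C, ∀ n, ‖u n‖ ≤ C := by
  have := hpq.ennrealOfReal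
  set T := (ContinuousLinearMap.mul ℝ ℝ).lpPairing μ (ENNReal.ofReal p) (ENNReal.ofReal q)
  have hT : ∀ f v, T f v = ∫ a, f a * v a ∂μ := fun f v => by
    simp [T, ContinuousLinearMap.lpPairing_eq_integral]
  obtain ⟨C, hC⟩ := banach_steinhaus (g := fun n => T (u n)) fun v => by
    obtain ⟨C, hC⟩ := (h v).norm.bddAbove_range
    exact ⟨C, fun n => by simpa only [hT] using hC ⟨n, rfl⟩⟩
  refine ⟨C, fun n => norm_le_of_forall_abs_integral_mul_le hpq (u n)
    ((norm_nonneg _).trans (hC n)) fun v => ?_⟩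
  rw [← hT, ← Real.norm_eq_abs]
  exact ((T (u n)).le_opNorm v).trans (mul_le_mul_of_nonneg_right (hC n) (norm_nonneg v))

lemma tendsto_integral_dualPow_mul_sub (hpq : p.HolderConjugate q) (g : Lp ℝ (ENNReal.ofReal p) μ)
    {u : ℕ → Lp ℝ (ENNReal.ofReal p) μ} {U : Lp ℝ (ENNReal.ofReal p) μ}
    (h : ∀ v : Lp ℝ (ENNReal.ofReal q) μ,
      Tendsto (fun n => ∫ a, u n a * v a ∂μ) atTop (nhds (∫ a, U a * v a ∂μ))) :
    Tendsto (fun n => ∫ a, dualPow p (g a) * (u n - U) a ∂μ) atTop (nhds 0) := by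
  set v := (memLp_dualPow hpq g).toLp _
  have hlim := (h v).sub_const (∫ a, U a * v a ∂μ)
  rw [sub_self] at hlim
  refine hlim.congr fun n => ?_
  rw [integral_mul_toLp_dualPow hpq, integral_mul_toLp_dualPow hpq,
    ← integral_sub (integrable_dualPow_mul hpq.lt _ _) (integrable_dualPow_mul hpq.lt _ _)]
  refine integral_congr_ae ?_
  filter_upwards [Lp.coeFn_sub (u n) U] with a ha
  rw [ha, Pi.sub_apply, mul_sub]

lemma eventually_neg_le_integral_dualPow_mul [Fact (1 ≤ ENNReal.ofReal p)] (hp : 2 ≤ p)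
    {h : ℕ → Lp ℝ (ENNReal.ofReal p) μ} {g : Lp ℝ (ENNReal.ofReal p) μ} {C : ℝ}
    (hC : ∀ n, ‖h n‖ ≤ C) (hnear : ∀ t : ℝ, 0 < t → t ≤ 1 → ∀ᶠ n in atTop, ‖h n‖ ≤ ‖h n + t • g‖)
    {ε : ℝ} (hε : 0 < ε) : ∀ᶠ n in atTop, -ε ≤ p * ∫ a, dualPow p (h n a) * g a ∂μ := by
  have hp0 : 0 < p := by linarith
  set R := (p ^ 2 * 2 ^ p + p) * (C ^ p + 2 * ‖g‖ ^ p)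
  obtain ⟨t, htR, ht0, ht1⟩ : ∃ t, t * R < ε ∧ 0 < t ∧ t ≤ 1 := by
    have hlim : Tendsto (fun t => t * R) (nhdsWithin 0 (Set.Ioi 0)) (nhds 0) :=
      ((continuous_mul_const R).tendsto' 0 0 (zero_mul R)).mono_left nhdsWithin_le_nhds
    exact ((hlim.eventually (gt_mem_nhds hε)).and (Ioc_mem_nhdsGT one_pos)).exists
  filter_upwards [hnear t ht0 ht1] with n hn
  have hup := norm_add_smul_rpow_le hp ht0.le ht1 (h n) g
  have hmono := Real.rpow_le_rpow (norm_nonneg _) hn hp0.le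
  have hCn := Real.rpow_le_rpow (norm_nonneg _) (hC n) hp0.le
  have hK : 0 ≤ p ^ 2 * 2 ^ p + p := by positivity
  -- `‖h n‖ ^ p ≤ ‖h n + t • g‖ ^ p` and the second-order expansion, divided by `t`
  have hdiv : 0 ≤ t * (p * ∫ a, dualPow p (h n a) * g a ∂μ + t * R) := by
    nlinarith [mul_le_mul_of_nonneg_left hCn (mul_nonneg (sq_nonneg t) hK)]
  nlinarith [nonneg_of_mul_nonneg_right hdiv ht0]

end MeasureTheory.Lp

end Lp

/-- Brezis–Lieb type inequality for `p ≥ 3` under weak and polar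
convergence in `L^p`. -/
theorem stmt_19 {Ω : Type*} [MeasurableSpace Ω] (μ : MeasureTheory.Measure Ω)
    (p q : ℝ) (hp : 3 ≤ p) (hpq : 1 / p + 1 / q = 1)
    [Fact (1 ≤ ENNReal.ofReal p)]
    (u : ℕ → MeasureTheory.Lp ℝ (ENNReal.ofReal p) μ)
    (U : MeasureTheory.Lp ℝ (ENNReal.ofReal p) μ)
    (hweak : ∀ v : MeasureTheory.Lp ℝ (ENNReal.ofReal q) μ,
      Filter.Tendsto (fun n => ∫ a, (u n : Ω → ℝ) a * (v : Ω → ℝ) a ∂μ) Filter.atTop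
        (nhds (∫ a, (U : Ω → ℝ) a * (v : Ω → ℝ) a ∂μ)))
    (hpolar : PolarLim u U) :
    0 ≤ Filter.liminf (fun n =>
      (∫ a, |(u n : Ω → ℝ) a| ^ p ∂μ) - (∫ a, |(U : Ω → ℝ) a| ^ p ∂μ) -
        ∫ a, |(u n : Ω → ℝ) a - (U : Ω → ℝ) a| ^ p ∂μ) Filter.atTop := by
  have hp0 : 0 < p := by linarith
  have hconj : p.HolderConjugate q :=
    Real.holderConjugate_iff.mpr ⟨by linarith, by simpa only [one_div] using hpq⟩
  have : Fact (1 ≤ ENNReal.ofReal q) := ⟨ENNReal.one_le_ofReal.mpr hconj.symm.lt.le⟩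
  have hnorms : ∀ n, (∫ a, |(u n : Ω → ℝ) a| ^ p ∂μ) - (∫ a, |(U : Ω → ℝ) a| ^ p ∂μ) -
      ∫ a, |(u n : Ω → ℝ) a - (U : Ω → ℝ) a| ^ p ∂μ = ‖u n‖ ^ p - ‖U‖ ^ p - ‖u n - U‖ ^ p := by
    intro n
    rw [Lp.integral_abs_rpow hp0, Lp.integral_abs_rpow hp0, ← Lp.integral_abs_rpow hp0 (u n - U)]
    congr 1
    refine integral_congr_ae ((Lp.coeFn_sub (u n) U).mono fun a ha => ?_)
    simp only [ha, Pi.sub_apply]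
  simp only [hnorms]
  refine liminf_nonneg_of_eventually_ge_neg fun ε hε => ?_
  obtain ⟨C, hC⟩ := Lp.exists_norm_le_of_tendsto_integral_mul hconj hweak
  have hb : Tendsto (fun n => p * ∫ a, dualPow p (U a) * (u n - U) a ∂μ) atTop (nhds 0) := by
    simpa using (Lp.tendsto_integral_dualPow_mul_sub hconj U hweak).const_mul p
  have hnear (t : ℝ) (_ : 0 < t) (_ : t ≤ 1) : ∀ᶠ n in atTop, ‖u n - U‖ ≤ ‖u n - U + t • U‖ := by
    filter_upwards [hpolar.eventually_dist_le ((1 - t) • U)] with n hn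
    rwa [dist_eq_norm, dist_eq_norm, sub_smul, one_smul, sub_sub_eq_add_sub,
      add_sub_right_comm] at hn
  have hc := Lp.eventually_neg_le_integral_dualPow_mul (by linarith) (C := C + ‖U‖)
    (fun n => (norm_sub_le (u n) U).trans (by linarith [hC n])) hnear (half_pos hε)
  filter_upwards [hb.eventually (lt_mem_nhds (by linarith : -(ε / 2) < 0)), hc] with n hbn hcn
  have := Lp.le_norm_add_rpow hp U (u n - U)
  rw [add_sub_cancel] at this
  linarith
end
end
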